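/- For all integers n ≥ k ≥ t ≥ 1 with n > k, the packing number satisfies D(n,k,t) ≤ ⌊(n/(n−k))·D(n−1,k,t)⌋. -/

import Mathlib

/-- The packing number D(n,k,t): the maximum number of k-subsets of an n-set
such that every t-subset is contained in at most one of them. -/
noncomputable def packingNumber (n k t : ℕ) : ℕ :=
  sSup {m | ∃ B : Finset (Finset (Fin n)),
    (∀ b ∈ B, b.card = k) ∧
    (∀ T : Finset (Fin n), T.card = t → (B.filter (fun b => T ⊆ b)).card ≤ 1) ∧
    B.card = m}

/-!
Double counting over a maximum packing `B` on `n` points: each block misses exactly `n - k`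
points, and the blocks missing a fixed point form a packing on the other `n - 1` points, so at most
`D(n-1,k,t)` blocks miss any given point. Hence `D(n,k,t) * (n - k) ≤ n * D(n-1,k,t)`.
-/

open Finset

section Packing

variable {α β : Type*} {k t : ℕ}

theorem exists_map_eq_of_forall_mem_range [Fintype α] {f : α ↪ β} {B : Finset (Finset β)}
    (hB : ∀ b ∈ B, ∀ y ∈ b, y ∈ Set.range f) :
    ∃ C : Finset (Finset α), C.map (mapEmbedding f).toEmbedding = B := by
  have hB' : B ⊆ (univ : Finset (Finset α)).map (mapEmbedding f).toEmbedding := by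
    intro b hb
    have hb' : b ⊆ univ.map f := fun y hy => by
      obtain ⟨z, rfl⟩ := hB b hb y hy
      exact mem_map_of_mem f (mem_univ z)
    obtain ⟨u, -, rfl⟩ := subset_map_iff.1 hb'
    exact mem_map_of_mem _ (mem_univ u)
  obtain ⟨C, -, hC⟩ := subset_map_iff.1 hB'
  exact ⟨C, hC.symm⟩

variable [DecidableEq α] [DecidableEq β]

def IsPacking (k t : ℕ) (B : Finset (Finset α)) : Prop :=
  (∀ b ∈ B, #b = k) ∧ ∀ T : Finset α, #T = t → #(B.filter (T ⊆ ·)) ≤ 1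

theorem IsPacking.of_map {f : α ↪ β} {C : Finset (Finset α)}
    (hC : IsPacking k t (C.map (mapEmbedding f).toEmbedding)) : IsPacking k t C := by
  refine ⟨fun b hb => ?_, fun T hT => ?_⟩
  · rw [← card_map f]
    exact hC.1 _ (mem_map_of_mem _ hb)
  · calc #(C.filter (T ⊆ ·))
        = #((C.filter (T ⊆ ·)).map (mapEmbedding f).toEmbedding) := (card_map _).symm
      _ = #((C.map (mapEmbedding f).toEmbedding).filter (T.map f ⊆ ·)) := by
          simp [filter_map, Function.comp_def]
      _ ≤ 1 := hC.2 _ (by rwa [card_map])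

theorem IsPacking.subset {B C : Finset (Finset α)} (hB : IsPacking k t B) (hCB : C ⊆ B) :
    IsPacking k t C :=
  ⟨fun b hb => hB.1 b (hCB hb), fun T hT =>
    (card_le_card (filter_subset_filter _ hCB)).trans (hB.2 T hT)⟩

theorem sum_card_filter_notMem_eq [Fintype α] {B : Finset (Finset α)} (hB : ∀ b ∈ B, #b = k) :
    ∑ x, #(B.filter (x ∉ ·)) = #B * (Fintype.card α - k) := by
  have := sum_card_bipartiteAbove_eq_sum_card_bipartiteBelow (s := univ) (t := B)
    (r := fun x b => x ∉ b)
  simp only [bipartiteAbove, bipartiteBelow] at this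
  rw [this, sum_const_nat]
  intro b hb
  rw [← hB b hb, ← card_compl]
  congr 1
  ext
  simp

end Packing

theorem packingNumber_eq (n k t : ℕ) :
    packingNumber n k t = sSup {m | ∃ B : Finset (Finset (Fin n)), IsPacking k t B ∧ #B = m} := by
  simp only [packingNumber, IsPacking, and_assoc]

theorem bddAbove_packing_card (n k t : ℕ) :
    BddAbove {m | ∃ B : Finset (Finset (Fin n)), IsPacking k t B ∧ #B = m} := by
  refine ⟨Fintype.card (Finset (Fin n)), ?_⟩
  rintro m ⟨B, -, rfl⟩
  exact card_le_univ B

theorem IsPacking.card_le_packingNumber {n : ℕ} {B : Finset (Finset (Fin n))}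
    (hB : IsPacking k t B) : #B ≤ packingNumber n k t := by
  rw [packingNumber_eq]
  exact le_csSup (bddAbove_packing_card n k t) ⟨B, hB, rfl⟩

theorem exists_isPacking_card_eq_packingNumber (n k t : ℕ) :
    ∃ B : Finset (Finset (Fin n)), IsPacking k t B ∧ #B = packingNumber n k t := by
  rw [packingNumber_eq]
  refine Nat.sSup_mem ?_ (bddAbove_packing_card n k t)
  exact ⟨0, ∅, by simp [IsPacking]⟩

theorem IsPacking.card_filter_notMem_le_packingNumber {m : ℕ} {B : Finset (Finset (Fin (m + 1)))}
    (hB : IsPacking k t B) (x : Fin (m + 1)) :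
    #(B.filter (x ∉ ·)) ≤ packingNumber m k t := by
  have hrange : ∀ b ∈ B.filter (x ∉ ·), ∀ y ∈ b, y ∈ Set.range x.succAboveEmb := by
    intro b hb y hy
    rw [Fin.coe_succAboveEmb, Fin.range_succAbove]
    exact ne_of_mem_of_not_mem hy (mem_filter.1 hb).2
  obtain ⟨C, hC⟩ := exists_map_eq_of_forall_mem_range hrange
  rw [← hC, card_map]
  exact (IsPacking.of_map (hC ▸ hB.subset (filter_subset _ _))).card_le_packingNumber

theorem stmt1_general (n k t : ℕ) (hkn : k < n) :
    packingNumber n k t ≤ n * packingNumber (n - 1) k t / (n - k) := by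
  obtain ⟨m, rfl⟩ : ∃ m, n = m + 1 := ⟨n - 1, by omega⟩
  rw [Nat.le_div_iff_mul_le (by omega), Nat.add_sub_cancel]
  obtain ⟨B, hB, hcard⟩ := exists_isPacking_card_eq_packingNumber (m + 1) k t
  calc packingNumber (m + 1) k t * (m + 1 - k)
      = ∑ x : Fin (m + 1), #(B.filter (x ∉ ·)) := by
        rw [sum_card_filter_notMem_eq hB.1, hcard, Fintype.card_fin]
    _ ≤ ∑ _x : Fin (m + 1), packingNumber m k t :=
        sum_le_sum fun x _ => hB.card_filter_notMem_le_packingNumber x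
    _ = (m + 1) * packingNumber m k t := by simp

theorem stmt1 (n k t : ℕ) (ht : 1 ≤ t) (htk : t ≤ k) (hkn : k < n) :
    packingNumber n k t ≤ n * packingNumber (n - 1) k t / (n - k) :=
  stmt1_general n k t hkn
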